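/- Let 1 < p < ∞ and K > 0. For every y ∈ (0,π_p), (coth_p(Ky))^{p−1} + (coth_p(K(π_p−y)))^{p−1} ≥ 2·(coth_p(K·π_p/2))^{p−1}, with equality if and only if y = π_p/2. -/

import Mathlib

/-! Write `s = sinh_p`. Then `coth_p^(p-1) = (1 + s^p)^((p-1)/p) s^(1-p)`, and since
`s' = cosh_p = (1 + s^p)^(1/p)` the chain rule collapses to `(coth_p^(p-1))' = -(p-1) s^(-p)`,
which is strictly increasing because `s` is. So `coth_p^(p-1)` is strictly convex on `(0, ∞)`,
and the inequality is strict midpoint convexity at `K y` and `K (π_p - y)`, whose midpoint is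
`K π_p / 2`. -/

/-- The generalized π: `π_p = 2 ∫₀¹ (1 - tᵖ)^(-1/p) dt`. -/
noncomputable def piP (p : ℝ) : ℝ := 2 * ∫ t in (0:ℝ)..1, (1 - t ^ p) ^ (-(1 / p))

/-- `arcsinh_p x = ∫₀ˣ (1 + tᵖ)^(-1/p) dt`. -/
noncomputable def arcsinhP (p x : ℝ) : ℝ := ∫ t in (0:ℝ)..x, (1 + t ^ p) ^ (-(1 / p))

/-- `sinh_p : [0,∞) → [0,∞)`, defined as the inverse of `arcsinh_p` on `[0,∞)`. -/
noncomputable def sinhP (p : ℝ) : ℝ → ℝ := Function.invFunOn (arcsinhP p) (Set.Ici 0)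

/-- `cosh_p x = (1 + sinh_p x ^ p)^(1/p)`. -/
noncomputable def coshP (p x : ℝ) : ℝ := (1 + sinhP p x ^ p) ^ (1 / p)

/-- `coth_p x = cosh_p x / sinh_p x`. -/
noncomputable def cothP (p x : ℝ) : ℝ := coshP p x / sinhP p x

open Set Filter MeasureTheory intervalIntegral

lemma StrictConvexOn.two_mul_map_midpoint_lt {s : Set ℝ} {f : ℝ → ℝ} (hf : StrictConvexOn ℝ s f)
    {a b : ℝ} (ha : a ∈ s) (hb : b ∈ s) (hab : a ≠ b) : 2 * f ((a + b) / 2) < f a + f b := by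
  have h := hf.2 ha hb hab (show (0 : ℝ) < 1 / 2 by norm_num) (show (0 : ℝ) < 1 / 2 by norm_num)
    (by norm_num)
  rw [smul_eq_mul, smul_eq_mul, smul_eq_mul, smul_eq_mul, ← mul_add, one_div_mul_eq_div] at h
  linarith

noncomputable def arcsinhPIntegrand (p t : ℝ) : ℝ := (1 + t ^ p) ^ (-(1 / p))

section

variable {p : ℝ}

lemma one_add_rpow_pos {t : ℝ} (ht : 0 ≤ t) : 0 < 1 + t ^ p := by
  have := Real.rpow_nonneg ht p
  linarith

lemma arcsinhPIntegrand_pos {t : ℝ} (ht : 0 ≤ t) : 0 < arcsinhPIntegrand p t :=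
  Real.rpow_pos_of_pos (one_add_rpow_pos ht) _

lemma continuousAt_arcsinhPIntegrand (hp : 0 ≤ p) {t : ℝ} (ht : 0 ≤ t) :
    ContinuousAt (arcsinhPIntegrand p) t :=
  (continuousAt_const.add (Real.continuousAt_rpow_const t p (Or.inr hp))).rpow_const
    (Or.inl (one_add_rpow_pos ht).ne')

lemma intervalIntegrable_arcsinhPIntegrand (hp : 0 ≤ p) {a b : ℝ} (ha : 0 ≤ a) (hb : 0 ≤ b) :
    IntervalIntegrable (arcsinhPIntegrand p) volume a b :=
  ContinuousOn.intervalIntegrable fun _ ht =>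
    (continuousAt_arcsinhPIntegrand hp ((le_min ha hb).trans ht.1)).continuousWithinAt

lemma arcsinhP_zero : arcsinhP p 0 = 0 := integral_same

lemma arcsinhP_add_integral (hp : 0 ≤ p) {x y : ℝ} (hx : 0 ≤ x) (hy : 0 ≤ y) :
    arcsinhP p y = arcsinhP p x + ∫ t in x..y, arcsinhPIntegrand p t :=
  (integral_add_adjacent_intervals (intervalIntegrable_arcsinhPIntegrand hp le_rfl hx)
    (intervalIntegrable_arcsinhPIntegrand hp hx hy)).symm

lemma strictMonoOn_arcsinhP (hp : 0 ≤ p) : StrictMonoOn (arcsinhP p) (Ici 0) := by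
  intro x hx y hy hxy
  have hpos : 0 < ∫ t in x..y, arcsinhPIntegrand p t :=
    intervalIntegral_pos_of_pos_on (intervalIntegrable_arcsinhPIntegrand hp hx hy)
      (fun t ht => arcsinhPIntegrand_pos (le_of_lt (lt_of_le_of_lt hx ht.1))) hxy
  linarith [arcsinhP_add_integral hp hx hy]

lemma arcsinhP_nonneg (hp : 0 ≤ p) {x : ℝ} (hx : 0 ≤ x) : 0 ≤ arcsinhP p x := by
  simpa [arcsinhP_zero] using (strictMonoOn_arcsinhP hp).monotoneOn self_mem_Ici hx hx

lemma continuousOn_arcsinhP (hp : 0 ≤ p) : ContinuousOn (arcsinhP p) (Ici 0) := by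
  intro x hx
  have hle : (0 : ℝ) ≤ x + 1 := by linarith [mem_Ici.1 hx]
  have hIcc : ContinuousOn (arcsinhP p) (Icc 0 (x + 1)) := by
    have h := continuousOn_primitive_interval'
      (intervalIntegrable_arcsinhPIntegrand hp le_rfl hle) left_mem_uIcc
    rwa [uIcc_of_le hle] at h
  refine (hIcc x ⟨hx, by linarith⟩).mono_of_mem_nhdsWithin ?_
  rw [← Ici_inter_Iic]
  exact inter_mem_nhdsWithin _ (Iic_mem_nhds (by linarith))

lemma hasDerivAt_arcsinhP (hp : 0 ≤ p) {u : ℝ} (hu : 0 < u) :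
    HasDerivAt (arcsinhP p) (arcsinhPIntegrand p u) u :=
  integral_hasDerivAt_right (intervalIntegrable_arcsinhPIntegrand hp le_rfl hu.le)
    (ContinuousAt.stronglyMeasurableAtFilter isOpen_Ioi
      (fun _ ht => continuousAt_arcsinhPIntegrand hp (le_of_lt ht)) u hu)
    (continuousAt_arcsinhPIntegrand hp hu.le)


lemma two_rpow_mul_inv_le_arcsinhPIntegrand (hp : 0 < p) {t : ℝ} (ht : 1 ≤ t) :
    (2 : ℝ) ^ (-(1 / p)) * t⁻¹ ≤ arcsinhPIntegrand p t := by
  have ht0 : 0 ≤ t := zero_le_one.trans ht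
  have hexp : -(1 / p) ≤ 0 := by
    have : 0 < 1 / p := by positivity
    linarith
  have hle : 1 + t ^ p ≤ 2 * t ^ p := by linarith [Real.one_le_rpow ht hp.le]
  calc (2 : ℝ) ^ (-(1 / p)) * t⁻¹ = (2 * t ^ p) ^ (-(1 / p)) := by
        rw [Real.mul_rpow zero_le_two (Real.rpow_nonneg ht0 p), ← Real.rpow_mul ht0,
          mul_neg, mul_one_div_cancel hp.ne', Real.rpow_neg_one]
    _ ≤ arcsinhPIntegrand p t :=
        Real.rpow_le_rpow_of_nonpos (one_add_rpow_pos ht0) hle hexp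

lemma tendsto_arcsinhP_atTop (hp : 0 < p) : Tendsto (arcsinhP p) atTop atTop := by
  have hc : (0 : ℝ) < (2 : ℝ) ^ (-(1 / p)) := Real.rpow_pos_of_pos two_pos _
  have hlog : Tendsto (fun x => arcsinhP p 1 + (2 : ℝ) ^ (-(1 / p)) * Real.log x) atTop atTop :=
    tendsto_atTop_add_const_left _ _ (Real.tendsto_log_atTop.const_mul_atTop hc)
  refine tendsto_atTop_mono' atTop ?_ hlog
  filter_upwards [eventually_ge_atTop (1 : ℝ)] with x hx
  have hint : ∫ t in (1 : ℝ)..x, (2 : ℝ) ^ (-(1 / p)) * t⁻¹ = (2 : ℝ) ^ (-(1 / p)) * Real.log x := by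
    rw [intervalIntegral.integral_const_mul, integral_inv_of_pos one_pos (one_pos.trans_le hx), div_one]
  have hmono : ∫ t in (1 : ℝ)..x, (2 : ℝ) ^ (-(1 / p)) * t⁻¹ ≤
      ∫ t in (1 : ℝ)..x, arcsinhPIntegrand p t := by
    refine integral_mono_on hx ?_ (intervalIntegrable_arcsinhPIntegrand hp.le zero_le_one
      (by linarith)) fun t ht => two_rpow_mul_inv_le_arcsinhPIntegrand hp ht.1
    refine (intervalIntegral.intervalIntegrable_inv (fun t ht => ?_) continuousOn_id).const_mul _
    rw [uIcc_of_le hx] at ht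
    exact (one_pos.trans_le ht.1).ne'
  rw [arcsinhP_add_integral hp.le zero_le_one (by linarith : (0 : ℝ) ≤ x)]
  linarith

lemma surjOn_arcsinhP (hp : 0 < p) : SurjOn (arcsinhP p) (Ici 0) (Ici 0) := by
  have h := intermediate_value_Ici (continuousOn_arcsinhP hp.le) (tendsto_arcsinhP_atTop hp)
  rwa [arcsinhP_zero] at h

lemma sinhP_nonneg (hp : 0 < p) {x : ℝ} (hx : 0 ≤ x) : 0 ≤ sinhP p x :=
  (surjOn_arcsinhP hp).mapsTo_invFunOn hx

lemma arcsinhP_sinhP (hp : 0 < p) {x : ℝ} (hx : 0 ≤ x) : arcsinhP p (sinhP p x) = x :=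
  (surjOn_arcsinhP hp).rightInvOn_invFunOn hx

lemma sinhP_arcsinhP (hp : 0 < p) {u : ℝ} (hu : 0 ≤ u) : sinhP p (arcsinhP p u) = u :=
  (strictMonoOn_arcsinhP hp.le).injOn.leftInvOn_invFunOn hu

lemma strictMonoOn_sinhP (hp : 0 < p) : StrictMonoOn (sinhP p) (Ici 0) := by
  intro x hx y hy hxy
  rwa [← (strictMonoOn_arcsinhP hp.le).lt_iff_lt (sinhP_nonneg hp hx) (sinhP_nonneg hp hy),
    arcsinhP_sinhP hp hx, arcsinhP_sinhP hp hy]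

lemma sinhP_pos (hp : 0 < p) {x : ℝ} (hx : 0 < x) : 0 < sinhP p x := by
  have h0 := sinhP_arcsinhP hp (le_refl (0 : ℝ))
  rw [arcsinhP_zero] at h0
  simpa only [h0] using strictMonoOn_sinhP hp self_mem_Ici hx.le hx

lemma continuousAt_sinhP (hp : 0 < p) {x : ℝ} (hx : 0 < x) : ContinuousAt (sinhP p) x :=
  (strictMonoOn_sinhP hp).continuousAt_of_image_mem_nhds (Ici_mem_nhds hx) <|
    mem_of_superset (Ici_mem_nhds (sinhP_pos hp hx)) fun u hu =>
      ⟨arcsinhP p u, arcsinhP_nonneg hp.le hu, sinhP_arcsinhP hp hu⟩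

lemma hasDerivAt_sinhP (hp : 0 < p) {x : ℝ} (hx : 0 < x) :
    HasDerivAt (sinhP p) (coshP p x) x := by
  have hs := sinhP_pos hp hx
  have h := (hasDerivAt_arcsinhP hp.le hs).of_local_left_inverse (continuousAt_sinhP hp hx)
    (arcsinhPIntegrand_pos hs.le).ne' <| by
      filter_upwards [Ioi_mem_nhds hx] with t ht using arcsinhP_sinhP hp ht.le
  rwa [arcsinhPIntegrand, ← Real.rpow_neg (one_add_rpow_pos hs.le).le, neg_neg] at h

noncomputable def cothPowOfSinh (p u : ℝ) : ℝ := (1 + u ^ p) ^ ((p - 1) / p) * u ^ (1 - p)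

lemma cothP_rpow_eq_cothPowOfSinh (hp : 0 < p) {x : ℝ} (hx : 0 ≤ x) :
    cothP p x ^ (p - 1) = cothPowOfSinh p (sinhP p x) := by
  have hs := sinhP_nonneg hp hx
  have hb := (one_add_rpow_pos (p := p) hs).le
  rw [cothP, coshP, cothPowOfSinh, Real.div_rpow (Real.rpow_nonneg hb _) hs,
    ← Real.rpow_mul hb, div_eq_mul_inv, ← Real.rpow_neg hs, one_div_mul_eq_div, neg_sub]

lemma hasDerivAt_cothPowOfSinh (hp : 0 < p) {u : ℝ} (hu : 0 < u) :
    HasDerivAt (cothPowOfSinh p) (-(p - 1) * u ^ (-p) * (1 + u ^ p) ^ (-(1 / p))) u := by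
  have hb := one_add_rpow_pos (p := p) hu.le
  have h := ((((Real.hasDerivAt_rpow_const (p := p) (Or.inl hu.ne')).const_add 1).rpow_const
    (p := (p - 1) / p) (Or.inl hb.ne')).mul (Real.hasDerivAt_rpow_const (p := 1 - p)
    (Or.inl hu.ne')))
  refine h.congr_deriv ?_
  have e1 : (p - 1) / p - 1 = -(1 / p) := by field_simp; ring
  have e2 : (1 : ℝ) - p - 1 = -p := by ring
  have e3 : (1 + u ^ p) ^ ((p - 1) / p) = (1 + u ^ p) * (1 + u ^ p) ^ (-(1 / p)) := by
    rw [show (p - 1) / p = 1 + -(1 / p) by field_simp; ring, Real.rpow_add hb, Real.rpow_one]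
  have e0 : p * u ^ (p - 1) * ((p - 1) / p) = (p - 1) * u ^ (p - 1) := by field_simp
  have e4 : u ^ (p - 1) * u ^ (1 - p) = 1 := by rw [← Real.rpow_add hu]; norm_num
  have e5 : u ^ p * u ^ (-p) = 1 := by rw [← Real.rpow_add hu]; norm_num
  rw [e0, e1, e2, e3]
  linear_combination ((p - 1) * (1 + u ^ p) ^ (-(1 / p))) * (e4 - e5)

lemma hasDerivAt_cothP_rpow (hp : 0 < p) {x : ℝ} (hx : 0 < x) :
    HasDerivAt (fun t => cothP p t ^ (p - 1)) (-(p - 1) * sinhP p x ^ (-p)) x := by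
  have hs := sinhP_pos hp hx
  have h := ((hasDerivAt_cothPowOfSinh hp hs).comp x (hasDerivAt_sinhP hp hx)).congr_of_eventuallyEq
    (by filter_upwards [Ioi_mem_nhds hx] with t ht using cothP_rpow_eq_cothPowOfSinh hp ht.le)
  refine h.congr_deriv ?_
  rw [coshP, mul_assoc, ← Real.rpow_add (one_add_rpow_pos hs.le), neg_add_cancel, Real.rpow_zero,
    mul_one]

lemma strictConvexOn_cothP_rpow (hp : 1 < p) :
    StrictConvexOn ℝ (Ioi 0) (fun t => cothP p t ^ (p - 1)) := by
  have hp0 : 0 < p := zero_lt_one.trans hp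
  refine StrictMonoOn.strictConvexOn_of_deriv (convex_Ioi 0)
    (fun x hx => (hasDerivAt_cothP_rpow hp0 hx).continuousAt.continuousWithinAt) ?_
  rw [interior_Ioi]
  intro x hx y hy hxy
  rw [(hasDerivAt_cothP_rpow hp0 hx).deriv, (hasDerivAt_cothP_rpow hp0 hy).deriv]
  have hs : sinhP p y ^ (-p) < sinhP p x ^ (-p) :=
    Real.rpow_lt_rpow_of_neg (sinhP_pos hp0 hx)
      (strictMonoOn_sinhP hp0 (mem_Ici_of_Ioi hx) (mem_Ici_of_Ioi hy) hxy) (by linarith)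
  nlinarith

end

/-- For `K > 0` and `y ∈ (0, π_p)`,
`(coth_p (K y))^(p-1) + (coth_p (K(π_p - y)))^(p-1) ≥ 2 (coth_p (K π_p/2))^(p-1)`,
with equality if and only if `y = π_p/2`. -/
theorem cothP_convexity_ineq (p K : ℝ) (hp : 1 < p) (hK : 0 < K) :
    ∀ y ∈ Set.Ioo (0:ℝ) (piP p),
      (cothP p (K * y)) ^ (p - 1) + (cothP p (K * (piP p - y))) ^ (p - 1) ≥
        2 * (cothP p (K * piP p / 2)) ^ (p - 1) ∧
      ((cothP p (K * y)) ^ (p - 1) + (cothP p (K * (piP p - y))) ^ (p - 1) =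
        2 * (cothP p (K * piP p / 2)) ^ (p - 1) ↔ y = piP p / 2) := by
  rintro y ⟨hy0, hyπ⟩
  by_cases hy : y = piP p / 2
  · subst hy
    rw [show K * (piP p - piP p / 2) = K * piP p / 2 by ring,
      show K * (piP p / 2) = K * piP p / 2 by ring]
    exact ⟨(two_mul _).le, iff_of_true (two_mul _).symm rfl⟩
  · have hne : K * y ≠ K * (piP p - y) := fun h => hy (by
      have := mul_left_cancel₀ hK.ne' h
      linarith)
    have hlt := (strictConvexOn_cothP_rpow hp).two_mul_map_midpoint_lt
      (mul_pos hK hy0) (mul_pos hK (sub_pos.2 hyπ)) hne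
    rw [show (K * y + K * (piP p - y)) / 2 = K * piP p / 2 by ring] at hlt
    exact ⟨hlt.le, iff_of_false hlt.ne' hy⟩
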